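/- Let A be a unital k-algebra, g ∈ A, let · : A ⊗ R → R be a linear map, w ∈ R, and let q ∈ k be a primitive M-th root of unity (M ≥ 1). For j ∈ ℕ₀, a ∈ A, r ∈ R define D_j(a,r) := Σ_{k=0}^{j} (−1)^k · q^{−k(k−1)/2} · binom(j,k)_{q⁻¹} · w^{j−k} · ((g^k a)·r) · w^k. Then: (ii) if 1_A·1_R = 1_R, then D_M(1_A, 1_R) = (1_R − (g^M·1_R))·w^M; and (iii) if g^M = 1_A and w^M ∈ Z(R), then D_j(a,r) = 0 for all j ≥ M, a ∈ A and r ∈ R. -/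

import Mathlib

open TensorProduct

noncomputable section

/-- Gaussian ($q$-)binomial coefficients, defined by the recursion
`binom(0,0)_q = 1`, `binom(n,m)_q = 0` for `m > n`,
`binom(n,m)_q = binom(n-1,m)_q + q^(n-m) * binom(n-1,m-1)_q`. -/
def qbinom {K : Type*} [CommRing K] (q : K) : ℕ → ℕ → K
  | 0, 0 => 1
  | 0, _ + 1 => 0
  | n + 1, 0 => qbinom q n 0
  | n + 1, m + 1 => qbinom q n (m + 1) + q ^ (n - m) * qbinom q n m

/-- A (left) partial action of a bialgebra `H` on an algebra `R`:
(PA.1) `1 · r = r`; (PA.2) `h · (r*s) = Σ (h₁ · r)(h₂ · s)`;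
(PA.3) `h · (m · r) = Σ (h₁ · 1)(h₂m · r)`. -/
structure PartialAction (k H R : Type*) [CommSemiring k] [Semiring H] [Bialgebra k H]
    [Semiring R] [Algebra k R] where
  act : H →ₗ[k] R →ₗ[k] R
  unit_act : ∀ r : R, act 1 r = r
  mul_act : ∀ (h : H) (r s : R),
    act h (r * s) = TensorProduct.lift
      ((LinearMap.mul k R).compl₁₂ (act.flip r) (act.flip s)) (Coalgebra.comul (R := k) h)
  act_act : ∀ (h m : H) (r : R),
    act h (act m r) = TensorProduct.lift
      ((LinearMap.mul k R).compl₁₂ (act.flip 1)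
        ((act.flip r).comp (LinearMap.mulRight k m))) (Coalgebra.comul (R := k) h)

/-- Symmetry (PA.S): `h · (m · r) = Σ (h₁m · r)(h₂ · 1)`. -/
def PartialAction.IsSymmetric {k H R : Type*} [CommSemiring k] [Semiring H] [Bialgebra k H]
    [Semiring R] [Algebra k R] (P : PartialAction k H R) : Prop :=
  ∀ (h m : H) (r : R),
    P.act h (P.act m r) = TensorProduct.lift
      ((LinearMap.mul k R).compl₁₂ ((P.act.flip r).comp (LinearMap.mulRight k m))
        (P.act.flip 1)) (Coalgebra.comul (R := k) h)

/-- A grouplike element: `Δ g = g ⊗ g` and `ε g = 1`. -/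
def IsGrouplike (k : Type*) {H : Type*} [CommSemiring k] [Semiring H] [Bialgebra k H]
    (g : H) : Prop :=
  Coalgebra.comul (R := k) g = g ⊗ₜ[k] g ∧ Coalgebra.counit (R := k) g = 1

/-- A `(1,g)`-primitive element: `Δ x = x ⊗ 1 + g ⊗ x`. -/
def IsOneGPrimitive (k : Type*) {H : Type*} [CommSemiring k] [Semiring H] [Bialgebra k H]
    (g x : H) : Prop :=
  Coalgebra.comul (R := k) x = x ⊗ₜ[k] (1 : H) + g ⊗ₜ[k] x

end

/-- The expression `D_j(a,r) = Σ_{i=0}^{j} (-1)^i q^{-i(i-1)/2} binom(j,i)_{q⁻¹}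
w^{j-i} ((gⁱa) · r) wⁱ`. -/
def Dfun {k A R : Type*} [Field k] [Ring A] [Algebra k A] [Ring R] [Algebra k R]
    (act : A →ₗ[k] R →ₗ[k] R) (g : A) (w : R) (q : k) (j : ℕ) (a : A) (r : R) : R :=
  ∑ i ∈ Finset.range (j + 1),
    ((-1 : k) ^ i * q⁻¹ ^ (i * (i - 1) / 2) * qbinom q⁻¹ j i) •
      (w ^ (j - i) * act (g ^ i * a) r * w ^ i)

open Finset

/-!
With `p = q⁻¹` and `c_j(i) = (-1)^i p^(i(i-1)/2) binom(j,i)_p`, the q-Pascal rule gives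
`c_{j+1}(i+1) = c_j(i+1) - p^j c_j(i)`, which becomes the recursion
`D_{j+1}(a,r) = w D_j(a,r) - p^j D_j(ga,r) w`. Since `binom(M,i)_p [i]_p! [M-i]_p! = [M]_p!` and,
for `p` of order `M`, the q-integers `[1]_p, …, [M-1]_p` are nonzero while `[M]_p = 0`, only the
terms `i = 0` and `i = M` of `D_M` survive; with `(-1)^M p^(M(M-1)/2) = -1` this gives
`D_M(a,r) = w^M (a·r) - ((g^M a)·r) w^M`, whence (ii). Under the hypotheses of (iii) this vanishes,
and the recursion propagates the vanishing to all `j ≥ M`.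
-/

section QAnalogues

variable {K : Type*} [CommRing K]

lemma qbinom_zero_right (q : K) : ∀ n, qbinom q n 0 = 1
  | 0 => rfl
  | n + 1 => qbinom_zero_right q n

lemma qbinom_eq_zero_of_lt (q : K) : ∀ {n m : ℕ}, n < m → qbinom q n m = 0
  | 0, _ + 1, _ => rfl
  | n + 1, m + 1, h => by
    rw [qbinom, qbinom_eq_zero_of_lt q (n := n) (m := m + 1) (by omega),
      qbinom_eq_zero_of_lt q (n := n) (m := m) (by omega), mul_zero, add_zero]

lemma qbinom_self (q : K) : ∀ n, qbinom q n n = 1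
  | 0 => rfl
  | n + 1 => by rw [qbinom, qbinom_eq_zero_of_lt q n.lt_succ_self, qbinom_self q n]; simp

def qnat (q : K) (n : ℕ) : K := ∑ i ∈ range n, q ^ i

def qfact (q : K) (n : ℕ) : K := ∏ i ∈ range n, qnat q (i + 1)

lemma qnat_add (q : K) (a b : ℕ) : qnat q (a + b) = qnat q a + q ^ a * qnat q b := by
  simp only [qnat, sum_range_add, mul_sum, pow_add]

lemma qfact_succ (q : K) (n : ℕ) : qfact q (n + 1) = qfact q n * qnat q (n + 1) :=
  prod_range_succ _ n

lemma qbinom_add_mul_qfact (q : K) :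
    ∀ m n, qbinom q (m + n) m * (qfact q m * qfact q n) = qfact q (m + n)
  | 0, n => by simp [qbinom_zero_right, qfact]
  | m + 1, 0 => by simp [qbinom_self, qfact]
  | m + 1, n + 1 => by
    have ih₁ := qbinom_add_mul_qfact q (m + 1) n
    have ih₂ := qbinom_add_mul_qfact q m (n + 1)
    rw [show m + (n + 1) = m + 1 + n by omega] at ih₂
    have hpascal : qbinom q (m + 1 + (n + 1)) (m + 1)
        = qbinom q (m + 1 + n) (m + 1) + q ^ (n + 1) * qbinom q (m + 1 + n) m := by
      rw [show m + 1 + (n + 1) = m + 1 + n + 1 by omega, qbinom,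
        show m + 1 + n - m = n + 1 by omega]
    have hqnat : qnat q (m + 1 + n + 1) = qnat q (n + 1) + q ^ (n + 1) * qnat q (m + 1) := by
      rw [← qnat_add]; congr 1; omega
    rw [qfact_succ q m] at ih₁
    rw [qfact_succ q n] at ih₂
    rw [hpascal, show m + 1 + (n + 1) = m + 1 + n + 1 by omega, qfact_succ q (m + 1 + n), hqnat,
      qfact_succ q m, qfact_succ q n]
    linear_combination qnat q (n + 1) * ih₁ + q ^ (n + 1) * qnat q (m + 1) * ih₂

end QAnalogues

namespace IsPrimitiveRoot

variable {K : Type*} [CommRing K] {ζ : K} {k : ℕ}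

lemma qnat_ne_zero (hζ : IsPrimitiveRoot ζ k) {i : ℕ} (hi₀ : 0 < i) (hik : i < k) :
    qnat ζ i ≠ 0 := by
  intro h
  have := mul_neg_geom_sum ζ i
  rw [← qnat, h, mul_zero, eq_comm, sub_eq_zero] at this
  exact hζ.pow_ne_one_of_pos_of_lt hi₀.ne' hik this.symm

lemma qfact_ne_zero [IsDomain K] (hζ : IsPrimitiveRoot ζ k) {i : ℕ} (hik : i < k) :
    qfact ζ i ≠ 0 :=
  prod_ne_zero_iff.mpr fun j hj => hζ.qnat_ne_zero j.succ_pos (by simp at hj; omega)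

lemma qfact_eq_zero [IsDomain K] (hζ : IsPrimitiveRoot ζ k) (hk : 1 < k) : qfact ζ k = 0 := by
  obtain ⟨n, rfl⟩ : ∃ n, k = n + 1 := ⟨k - 1, by omega⟩
  rw [qfact_succ, qnat, hζ.geom_sum_eq_zero hk, mul_zero]

lemma qbinom_eq_zero [IsDomain K] (hζ : IsPrimitiveRoot ζ k) {i : ℕ} (hi₀ : 0 < i) (hik : i < k) :
    qbinom ζ k i = 0 := by
  have key := qbinom_add_mul_qfact ζ i (k - i)
  rw [Nat.add_sub_cancel' hik.le, hζ.qfact_eq_zero (by omega)] at key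
  exact (mul_eq_zero.mp key).resolve_right
    (mul_ne_zero (hζ.qfact_ne_zero hik) (hζ.qfact_ne_zero (by omega)))

lemma neg_one_pow_mul_pow_triangle [IsDomain K] (hζ : IsPrimitiveRoot ζ k) (hk : 1 ≤ k) :
    (-1 : K) ^ k * ζ ^ (k * (k - 1) / 2) = -1 := by
  rcases Nat.even_or_odd' k with ⟨t, rfl | rfl⟩
  · have ht : t ≠ 0 := by omega
    have hζt : ζ ^ t = -1 := by
      apply IsPrimitiveRoot.eq_neg_one_of_two_right
      simpa [ht] using hζ.pow_of_dvd ht (dvd_mul_left t 2)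
    have hexp : 2 * t * (2 * t - 1) / 2 = t * (2 * t - 1) := by
      rw [mul_assoc, Nat.mul_div_cancel_left _ two_pos]
    rw [hexp, (even_two_mul t).neg_one_pow, one_mul, pow_mul, hζt,
      Odd.neg_one_pow ⟨t - 1, by omega⟩]
  · have hexp : (2 * t + 1) * (2 * t + 1 - 1) / 2 = (2 * t + 1) * t := by
      rw [Nat.add_sub_cancel, mul_left_comm, Nat.mul_div_cancel_left _ two_pos]
    rw [hexp, pow_mul, hζ.pow_eq_one, one_pow, mul_one, (odd_two_mul_add_one t).neg_one_pow]

end IsPrimitiveRoot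

section SignedQBinom

variable {K : Type*} [CommRing K]

/-- The coefficient of `x^i` in `∏_{l<j} (1 - p^l x)`. -/
def signedQBinom (p : K) (j i : ℕ) : K := (-1) ^ i * p ^ (i * (i - 1) / 2) * qbinom p j i

lemma signedQBinom_zero_right (p : K) (j : ℕ) : signedQBinom p j 0 = 1 := by
  simp [signedQBinom, qbinom_zero_right]

lemma signedQBinom_eq_zero_of_lt (p : K) {j i : ℕ} (h : j < i) : signedQBinom p j i = 0 := by
  simp [signedQBinom, qbinom_eq_zero_of_lt p h]

lemma signedQBinom_succ_succ (p : K) (j i : ℕ) :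
    signedQBinom p (j + 1) (i + 1) = signedQBinom p j (i + 1) - p ^ j * signedQBinom p j i := by
  rcases lt_or_ge j i with h | h
  · simp [signedQBinom_eq_zero_of_lt p h, signedQBinom_eq_zero_of_lt p (Nat.lt_succ_of_lt h),
      signedQBinom_eq_zero_of_lt p (Nat.succ_lt_succ h)]
  · have hexp : p ^ ((i + 1) * (i + 1 - 1) / 2) * p ^ (j - i) = p ^ j * p ^ (i * (i - 1) / 2) := by
      rw [← pow_add, ← pow_add, Nat.triangle_succ]; congr 1; omega
    simp only [signedQBinom, qbinom, pow_succ]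
    linear_combination (-(-1) ^ i * qbinom p j i) * hexp

lemma sum_signedQBinom_succ_smul {M : Type*} [AddCommGroup M] [Module K M] (p : K) (j : ℕ)
    (T : ℕ → M) :
    ∑ i ∈ range (j + 2), signedQBinom p (j + 1) i • T i
      = ∑ i ∈ range (j + 1), signedQBinom p j i • T i
        - p ^ j • ∑ i ∈ range (j + 1), signedQBinom p j i • T (i + 1) := by
  have hshift : ∑ i ∈ range (j + 1), signedQBinom p j i • T i
      = ∑ i ∈ range (j + 1), signedQBinom p j (i + 1) • T (i + 1) + T 0 :=
    calc ∑ i ∈ range (j + 1), signedQBinom p j i • T i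
        = ∑ i ∈ range (j + 2), signedQBinom p j i • T i := by
          rw [sum_range_succ _ (j + 1), signedQBinom_eq_zero_of_lt p j.lt_succ_self, zero_smul,
            add_zero]
      _ = _ := by rw [sum_range_succ', signedQBinom_zero_right, one_smul]
  rw [sum_range_succ', hshift, smul_sum, signedQBinom_zero_right, one_smul]
  simp only [signedQBinom_succ_succ, sub_smul, mul_smul, sum_sub_distrib]
  abel

end SignedQBinom

section D

variable {k A R : Type*} [Field k] [Ring A] [Algebra k A] [Ring R] [Algebra k R]
  (act : A →ₗ[k] R →ₗ[k] R) (g : A) (w : R) (q : k)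

lemma Dfun_eq_sum (j : ℕ) (a : A) (r : R) :
    Dfun act g w q j a r
      = ∑ i ∈ range (j + 1), signedQBinom q⁻¹ j i • (w ^ (j - i) * act (g ^ i * a) r * w ^ i) :=
  rfl

lemma Dfun_succ (j : ℕ) (a : A) (r : R) :
    Dfun act g w q (j + 1) a r
      = w * Dfun act g w q j a r - q⁻¹ ^ j • (Dfun act g w q j (g * a) r * w) := by
  rw [Dfun_eq_sum, sum_signedQBinom_succ_smul, Dfun_eq_sum, Dfun_eq_sum, mul_sum, sum_mul]
  congr 1
  · refine sum_congr rfl fun i hi => ?_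
    rw [mul_smul_comm, ← mul_assoc, ← mul_assoc, ← pow_succ',
      show j - i + 1 = j + 1 - i by simp at hi; omega]
  · congr 1
    refine sum_congr rfl fun i _ => ?_
    rw [smul_mul_assoc, mul_assoc _ _ w, ← pow_succ, ← mul_assoc, ← pow_succ,
      show j + 1 - (i + 1) = j - i by omega]

lemma Dfun_of_isPrimitiveRoot {M : ℕ} (hM : 1 ≤ M) (hq : IsPrimitiveRoot q M) (a : A) (r : R) :
    Dfun act g w q M a r = w ^ M * act a r - act (g ^ M * a) r * w ^ M := by
  have hp : IsPrimitiveRoot q⁻¹ M := hq.inv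
  have hinner : ∀ i ∈ range M, signedQBinom q⁻¹ M i • (w ^ (M - i) * act (g ^ i * a) r * w ^ i)
      = if i = 0 then w ^ M * act a r else 0 := by
    intro i hi
    split_ifs with h
    · simp [h, signedQBinom_zero_right]
    · rw [signedQBinom, hp.qbinom_eq_zero (Nat.pos_of_ne_zero h) (by simpa using hi), mul_zero,
        zero_smul]
  rw [Dfun_eq_sum, sum_range_succ, sum_congr rfl hinner, sum_ite_eq' _ _ (fun _ => w ^ M * act a r),
    if_pos (by simp; omega), signedQBinom, qbinom_self, mul_one,
    hp.neg_one_pow_mul_pow_triangle hM, Nat.sub_self, pow_zero, one_mul, neg_one_smul,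
    sub_eq_add_neg]

lemma Dfun_eq_zero_of_le {M : ℕ} (hM : 1 ≤ M) (hq : IsPrimitiveRoot q M) (hg : g ^ M = 1)
    (hw : w ^ M ∈ Set.center R) {j : ℕ} (hj : M ≤ j) (a : A) (r : R) :
    Dfun act g w q j a r = 0 := by
  induction j, hj using Nat.le_induction generalizing a with
  | base =>
    rw [Dfun_of_isPrimitiveRoot act g w q hM hq, hg, one_mul,
      Semigroup.mem_center_iff.mp hw (act a r), sub_self]
  | succ j _ ih => rw [Dfun_succ, ih, ih, mul_zero, zero_mul, smul_zero, sub_zero]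

end D

theorem stmt10_general {k A R : Type*} [Field k]
    [Ring A] [Algebra k A] [Ring R] [Algebra k R]
    (act : A →ₗ[k] R →ₗ[k] R) (g : A) (w : R)
    (q : k) (M : ℕ) (hM : 1 ≤ M) (hq : IsPrimitiveRoot q M) :
    (act 1 1 = 1 → Dfun act g w q M 1 1 = (1 - act (g ^ M) 1) * w ^ M) ∧
    (g ^ M = 1 → w ^ M ∈ Set.center R →
      ∀ j, M ≤ j → ∀ (a : A) (r : R), Dfun act g w q j a r = 0) := by
  refine ⟨fun h1 => ?_, fun hg hw _ hj => Dfun_eq_zero_of_le act g w q hM hq hg hw hj⟩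
  rw [Dfun_of_isPrimitiveRoot act g w q hM hq, h1, mul_one, mul_one, sub_mul, one_mul]

/-- Lemma 3.5(ii),(iii): if `q` is a primitive `M`-th root of unity then
(ii) if `1_A · 1_R = 1_R` then `D_M(1,1) = (1 - (g^M · 1_R)) w^M`; and
(iii) if `g^M = 1` and `w^M ∈ Z(R)` then `D_j(a,r) = 0` for `j ≥ M`. -/
theorem stmt10 {k A R : Type*} [Field k] [IsAlgClosed k] [CharZero k]
    [Ring A] [Algebra k A] [Ring R] [Algebra k R]
    (act : A →ₗ[k] R →ₗ[k] R) (g : A) (w : R)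
    (q : k) (M : ℕ) (hM : 1 ≤ M) (hq : IsPrimitiveRoot q M) :
    (act 1 1 = 1 → Dfun act g w q M 1 1 = (1 - act (g ^ M) 1) * w ^ M) ∧
    (g ^ M = 1 → w ^ M ∈ Set.center R →
      ∀ j, M ≤ j → ∀ (a : A) (r : R), Dfun act g w q j a r = 0) :=
  stmt10_general act g w q M hM hq
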